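/- arXiv:2304.01609 — 6 statements merged into one kernel-verified Lean document; each statement's English description precedes it below -/
import Mathlib

section
/- For all real numbers a, b with a > 0, b > 0 and |a − b| < 1, one has (a + b) − 2(a^2 + b^2) + 8(a^3 + b^3) + 2(a^4 + b^4) − (a^5 + b^5) + 8ab + 12(a^3 b + a b^3) + 3(a^4 b + a b^4) − 12 a^2 b^2 − 2(a^3 b^2 + a^2 b^3) > 0. -/
/-- Case 1B: positivity of the numerator of `min_𝔈 s_g` on the Kähler cone,
parametrized by `a, b > 0` with `|a - b| < 1`. -/
theorem case1B_numerator_positive (a b : ℝ) (ha : 0 < a) (hb : 0 < b)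
    (hab : |a - b| < 1) :
    (a + b) - 2 * (a ^ 2 + b ^ 2) + 8 * (a ^ 3 + b ^ 3) + 2 * (a ^ 4 + b ^ 4)
      - (a ^ 5 + b ^ 5) + 8 * (a * b) + 12 * (a ^ 3 * b + a * b ^ 3)
      + 3 * (a ^ 4 * b + a * b ^ 4) - 12 * (a ^ 2 * b ^ 2)
      - 2 * (a ^ 3 * b ^ 2 + a ^ 2 * b ^ 3) > 0 := by
  have h1 : (a - b) ^ 2 < 1 := by
    have := abs_lt.mp hab
    nlinarith [this.1, this.2]
  nlinarith [mul_pos ha hb, mul_pos (mul_pos ha hb) (mul_pos ha hb),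
    mul_nonneg (mul_nonneg (add_pos ha hb).le (sq_nonneg (a-b))) (sub_nonneg.mpr h1.le),
    mul_pos (add_pos ha hb) (mul_pos ha hb),
    sq_nonneg (a - b), sq_nonneg (a + b - 1),
    mul_nonneg (mul_pos ha hb).le (sq_nonneg (a - b)),
    mul_nonneg (mul_pos ha hb).le (sq_nonneg (a + b - 1))]
end

section
/- For all real numbers a, b with a > 0, b > 0, |a − b| < 1 and a + b > 1, one has −1 + 4(a + b) − 6(a^2 + b^2) + 4(a^3 + b^3) − (a − b)^4 > 0; consequently 16·π·(1 + a + b)·(−1 + 4(a + b) − 6(a^2 + b^2) + 4(a^3 + b^3) − (a − b)^4) > 0. -/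
/-- Case 2A: positivity of the numerator of `min_𝔈 s_g` on the Kähler cone,
parametrized by `a, b > 0` with `|a - b| < 1` and `a + b > 1`. -/
theorem case2A_numerator_positive (a b : ℝ) (ha : 0 < a) (hb : 0 < b)
    (hab : |a - b| < 1) (hsum : a + b > 1) :
    (-1 + 4 * (a + b) - 6 * (a ^ 2 + b ^ 2) + 4 * (a ^ 3 + b ^ 3) - (a - b) ^ 4 > 0) ∧
    16 * Real.pi * (1 + a + b) *
      (-1 + 4 * (a + b) - 6 * (a ^ 2 + b ^ 2) + 4 * (a ^ 3 + b ^ 3) - (a - b) ^ 4) > 0 := by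
  have hd : (a - b) ^ 2 < 1 := by
    have := abs_lt.mp hab
    nlinarith [this.1, this.2]
  have hnum : -1 + 4 * (a + b) - 6 * (a ^ 2 + b ^ 2) + 4 * (a ^ 3 + b ^ 3) - (a - b) ^ 4 > 0 := by
    have hs : 0 < a + b - 1 := by linarith
    have hd4 : (a - b) ^ 4 < 1 := by nlinarith [sq_nonneg (a - b)]
    nlinarith [mul_nonneg (sq_nonneg (a - b)) hs.le, mul_nonneg (mul_nonneg hs.le hs.le) hs.le]
  refine ⟨hnum, ?_⟩
  have : 0 < 1 + a + b := by linarith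
  positivity
end

section
/- For all real numbers a, b with a > 0, b > 0 and |a − b| < 2, one has 8(a + b) − 12(a^2 + b^2) + 8(a^3 + b^3) − (a^4 + b^4) + 24ab + 4(a^3 b + a b^3) − 6 a^2 b^2 > 0. -/
/-- Case 2D: positivity of the numerator of `min_𝔈 s_g` on the Kähler cone,
parametrized by `a, b > 0` with `|a - b| < 2`. -/
theorem case2D_numerator_positive (a b : ℝ) (ha : 0 < a) (hb : 0 < b)
    (hab : |a - b| < 2) :
    8 * (a + b) - 12 * (a ^ 2 + b ^ 2) + 8 * (a ^ 3 + b ^ 3) - (a ^ 4 + b ^ 4)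
      + 24 * (a * b) + 4 * (a ^ 3 * b + a * b ^ 3) - 6 * (a ^ 2 * b ^ 2) > 0 := by
  have h4 : (a - b) ^ 2 < 4 := by
    have := abs_lt.mp hab
    nlinarith [this.1, this.2]
  have hab' : 0 < a * b := mul_pos ha hb
  nlinarith [sq_nonneg (a - b), sq_nonneg (a + b - 2), mul_pos hab' hab',
    mul_pos (mul_pos ha hb) (add_pos ha hb),
    mul_nonneg (sq_nonneg (a - b)) (le_of_lt (add_pos ha hb)),
    mul_pos hab' (add_pos ha hb),
    mul_nonneg (mul_nonneg hab'.le hab'.le) (add_pos ha hb).le,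
    mul_pos (sub_pos.mpr h4) hab',
    mul_nonneg (sub_pos.mpr h4).le (sq_nonneg (a - b)),
    mul_nonneg (mul_nonneg (sub_pos.mpr h4).le hab'.le) (add_pos ha hb).le]
end

section
/- For every real number a with 0 < a < 1, the polynomial 9a^3 − 26a^2 + 24a − 8 is negative and the polynomial 21a^4 − 84a^3 + 128a^2 − 96a + 32 is positive; consequently −8·π·(a + 2)·(9a^3 − 26a^2 + 24a − 8) / (a·(21a^4 − 84a^3 + 128a^2 − 96a + 32)) > 0. -/
/-- Case 3A: for `0 < a < 1` the numerator polynomial is negative, the denominator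
polynomial is positive, hence `min_𝔈 s_g > 0`. -/
theorem case3A_min_scalar_positive (a : ℝ) (h0 : 0 < a) (h1 : a < 1) :
    9 * a ^ 3 - 26 * a ^ 2 + 24 * a - 8 < 0 ∧
    21 * a ^ 4 - 84 * a ^ 3 + 128 * a ^ 2 - 96 * a + 32 > 0 ∧
    -8 * Real.pi * (a + 2) * (9 * a ^ 3 - 26 * a ^ 2 + 24 * a - 8) /
      (a * (21 * a ^ 4 - 84 * a ^ 3 + 128 * a ^ 2 - 96 * a + 32)) > 0 := by
  have hnum : 9 * a ^ 3 - 26 * a ^ 2 + 24 * a - 8 < 0 := by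
    nlinarith [sq_nonneg (1 - a), sq_nonneg a, mul_pos h0 h0, sq_nonneg (a * (1 - a)),
      mul_pos (mul_pos h0 h0) h0]
  have hden : 21 * a ^ 4 - 84 * a ^ 3 + 128 * a ^ 2 - 96 * a + 32 > 0 := by
    nlinarith [sq_nonneg (1 - a), sq_nonneg (a ^ 2 - 2 * a), sq_nonneg a,
      sq_nonneg (a ^ 2 - a), mul_pos h0 h0]
  refine ⟨hnum, hden, div_pos ?_ (by positivity)⟩
  have := Real.pi_pos
  nlinarith [mul_pos this (mul_pos (by linarith : (0:ℝ) < a + 2) (by linarith : (0:ℝ) < -(9 * a ^ 3 - 26 * a ^ 2 + 24 * a - 8)))]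
end

section
/- For every real number a with 0 < a < 2/3, the polynomial 35a^3 − 42a^2 + 24a − 8 is negative and the polynomial 475a^4 − 1140a^3 + 1056a^2 − 480a + 96 is positive; consequently 24·π·(a − 2)·(35a^3 − 42a^2 + 24a − 8) / (a·(475a^4 − 1140a^3 + 1056a^2 − 480a + 96)) > 0. -/
/-- Case 3E: for `0 < a < 2/3` the cubic is negative, the quartic is positive,
hence `min_𝔈 s_g > 0`. -/
theorem case3E_min_scalar_positive (a : ℝ) (h0 : 0 < a) (h1 : a < 2 / 3) :
    35 * a ^ 3 - 42 * a ^ 2 + 24 * a - 8 < 0 ∧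
    475 * a ^ 4 - 1140 * a ^ 3 + 1056 * a ^ 2 - 480 * a + 96 > 0 ∧
    24 * Real.pi * (a - 2) * (35 * a ^ 3 - 42 * a ^ 2 + 24 * a - 8) /
      (a * (475 * a ^ 4 - 1140 * a ^ 3 + 1056 * a ^ 2 - 480 * a + 96)) > 0 := by
  have hb : (0:ℝ) < 2/3 - a := by linarith
  have hcubic : 35 * a ^ 3 - 42 * a ^ 2 + 24 * a - 8 < 0 := by
    nlinarith [sq_nonneg a, sq_nonneg (2/3 - a), mul_pos h0 hb, mul_pos (mul_pos h0 hb) hb, sq_nonneg (a - 2/5)]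
  have hquart : 475 * a ^ 4 - 1140 * a ^ 3 + 1056 * a ^ 2 - 480 * a + 96 > 0 := by
    nlinarith [sq_nonneg (a - 2/3), sq_nonneg a, sq_nonneg (a^2 - a), mul_pos h0 hb, sq_nonneg (a^2 - 2/3*a), sq_nonneg (25*a^2 - 30*a + 12)]
  refine ⟨hcubic, hquart, ?_⟩
  apply div_pos
  · have h2 : (0:ℝ) < (2 - a) * (-(35 * a ^ 3 - 42 * a ^ 2 + 24 * a - 8)) :=
      mul_pos (by linarith) (by linarith)
    nlinarith [mul_pos (mul_pos (by norm_num : (0:ℝ) < 24) Real.pi_pos) h2]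
  · exact mul_pos h0 hquart
end

section
/- Let e : ℕ → ℤ satisfy e i ≥ 2 for every i ≥ 1, let v i = (u i, V i) be the associated vertex sequence, and suppose v (k+1) = (p, −q) for integers p, q and some natural number k. Then p·(V i) + q·(u i) > 0 for every index i with 0 ≤ i ≤ k, while p·(V (k+1)) + q·(u (k+1)) = 0. In particular, for θ > 0 and τ = 0 the weights w i := θ·(p·V i + q·u i) are strictly positive for all 0 ≤ i ≤ k. -/
/-- The vertex sequence of the fan of the minimal resolution of `ℂ²/L(q,p)`,
associated to the Hirzebruch–Jung coefficients `e`: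
`v 0 = (0,1)`, `v 1 = (1,0)`, `v (i+1) = (e i) • v i - v (i-1)`. -/
def vseq (e : ℕ → ℤ) : ℕ → ℤ × ℤ
  | 0 => (0, 1)
  | 1 => (1, 0)
  | (i + 2) => (e (i + 1)) • vseq e (i + 1) - vseq e i

lemma vseq_det (e : ℕ → ℤ) :
    ∀ i, (vseq e i).1 * (vseq e (i + 1)).2 - (vseq e i).2 * (vseq e (i + 1)).1 = -1 := by
  intro i
  induction i with
  | zero => simp [vseq]
  | succ n ih =>
    have h : vseq e (n + 2) = (e (n + 1)) • vseq e (n + 1) - vseq e n := rfl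
    rw [h]
    simp only [Prod.smul_fst, Prod.smul_snd, Prod.fst_sub, Prod.snd_sub, smul_eq_mul]
    nlinarith [ih]

/-- If all Hirzebruch–Jung coefficients satisfy `e i ≥ 2` (for `i ≥ 1`) and
`v (k+1) = (p, -q)`, then `p V_i + q u_i > 0` for `0 ≤ i ≤ k` while
`p V_{k+1} + q u_{k+1} = 0`; in particular, for `θ > 0` and `τ = 0` the weights
`w i = θ (p V_i + q u_i)` are strictly positive for `0 ≤ i ≤ k`. -/
theorem weights_positive_when_tau_zero (e : ℕ → ℤ) (he : ∀ i ≥ 1, 2 ≤ e i)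
    (p q : ℤ) (k : ℕ) (hk : vseq e (k + 1) = (p, -q)) :
    (∀ i ≤ k, 0 < p * (vseq e i).2 + q * (vseq e i).1) ∧
    p * (vseq e (k + 1)).2 + q * (vseq e (k + 1)).1 = 0 ∧
    ∀ θ : ℝ, 0 < θ → ∀ i ≤ k,
      0 < θ * ((p : ℝ) * ((vseq e i).2 : ℝ) + (q : ℝ) * ((vseq e i).1 : ℝ)) := by
  set w : ℕ → ℤ := fun i => p * (vseq e i).2 + q * (vseq e i).1 with hw
  have hp : (vseq e (k + 1)).1 = p := by rw [hk]
  have hq : (vseq e (k + 1)).2 = -q := by rw [hk]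
  have hwk1 : w (k + 1) = 0 := by simp [hw, hp, hq]; ring
  have hwk : w k = 1 := by
    have := vseq_det e k
    simp only [hw]
    rw [hp, hq] at this
    linarith
  -- recurrence for w
  have hrec : ∀ i, w (i + 2) = e (i + 1) * w (i + 1) - w i := by
    intro i
    have h : vseq e (i + 2) = (e (i + 1)) • vseq e (i + 1) - vseq e i := rfl
    simp only [hw, h, Prod.smul_fst, Prod.smul_snd, Prod.fst_sub, Prod.snd_sub, smul_eq_mul]
    ring
  -- downward induction
  have key : ∀ d i, i + d = k → w (i + 1) + 1 ≤ w i ∧ 0 ≤ w (i + 1) := by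
    intro d
    induction d with
    | zero =>
      intro i hi
      simp only [Nat.add_zero] at hi
      subst hi
      simp [hwk, hwk1]
    | succ n ih =>
      intro i hi
      have h1 : (i + 1) + n = k := by omega
      obtain ⟨ha, hb⟩ := ih (i + 1) h1
      have he' : 2 ≤ e (i + 1) := he (i + 1) (by omega)
      have hr := hrec i
      constructor
      · nlinarith
      · linarith
  have hpos : ∀ i ≤ k, 0 < w i := by
    intro i hi
    rcases Nat.lt_or_ge i k with h | h
    · have := key (k - i) i (by omega)
      linarith [this.1, this.2]
    · have : i = k := le_antisymm hi h
      subst this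
      simp [hwk]
  refine ⟨hpos, hwk1, ?_⟩
  intro θ hθ i hi
  have := hpos i hi
  have : (0 : ℝ) < (p : ℝ) * ((vseq e i).2 : ℝ) + (q : ℝ) * ((vseq e i).1 : ℝ) := by
    have h2 : (0 : ℝ) < ((w i : ℤ) : ℝ) := by exact_mod_cast this
    simpa [hw] using h2
  positivity
end
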